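/- Let U: ℝ³ → [0,∞) be integrable with lim_{|x|→∞} ‖(|x⊥|^α,|x₃|^γ)‖_{2/β}·U(x) = g > 0, where α > 2, β > 0, α/(α-2) < γ < 3α/(α-2), and set η = 3αγ/(2γ+α). Then limsup_{t→∞} t^{-3/η} ∫_{ℝ³} (1 - e^{-t U(x)}) dx ≥ ∫_{ℝ³} (1 - e^{-u(x)}) dx, where u(x) = g·(|x⊥|^{2α/β} + |x₃|^{2γ/β})^{-β/2}. Equivalently, after the substitution x ↦ (t^{1/α}x⊥, t^{1/γ}x₃), one has t^{-3/η} ∫(1 - e^{-tU(x)})dx = ∫(1 - e^{-t U(t^{1/α}y⊥, t^{1/γ}y₃)}) dy, and by Fatou's lemma the liminf of the right side is at least ∫(1 - e^{-u(y)}) dy. -/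

import Mathlib

open MeasureTheory Real Filter

/-- The `2/β`-pseudo-norm of `(c₁, c₂) ∈ ℝ²`. -/
noncomputable def pnorm (β c₁ c₂ : ℝ) : ℝ := (|c₁| ^ (2 / β) + |c₂| ^ (2 / β)) ^ (β / 2)

/-- The anisotropic model potential `u(x) = g (|x⊥|^{2α/β} + |x₃|^{2γ/β})^{-β/2}`. -/
noncomputable def uFun (g α β γ : ℝ) (x : EuclideanSpace ℝ (Fin 3)) : ℝ :=
  g * (Real.sqrt ((x 0) ^ 2 + (x 1) ^ 2) ^ (2 * α / β) + |x 2| ^ (2 * γ / β)) ^ (-(β / 2))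

/-!
Substituting `x = (t^{1/α} y⊥, t^{1/γ} y₃)`, whose Jacobian is `t^{2/α + 1/γ} = t^{3/η}`, turns
`t^{-3/η} ∫ (1 - e^{-tU})` into `∫ (1 - e^{-t U(S_t y)}) dy`. The weight `w` of the hypothesis on
`U` is homogeneous, `w(S_t y) = t w(y)`, so `t U(S_t y) = w(S_t y) U(S_t y) / w(y) → g / w(y) = u(y)`.
Once `S_t y` leaves a ball where the asymptotics of `U` are not yet in force, `t U(S_t y) ≤ 2 u(y)`;
since `S_t` only expands for `t ≥ 1`, the integrands are dominated by the indicator of that ball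
plus `2(1 - e^{-u})`, and dominated convergence gives the limit, not only the liminf.
If `1 - e^{-u}` is not integrable its integral is `0` by convention and the bound is trivial.
-/

theorem integral_comp_linearMap {E F : Type*} [NormedAddCommGroup E] [NormedSpace ℝ E]
    [MeasurableSpace E] [BorelSpace E] [FiniteDimensional ℝ E] (μ : Measure E)
    [μ.IsAddHaarMeasure] [NormedAddCommGroup F] [NormedSpace ℝ F] (f : E → F)
    {L : E →ₗ[ℝ] E} (hL : LinearMap.det L ≠ 0) :
    ∫ y, f (L y) ∂μ = |LinearMap.det L|⁻¹ • ∫ x, f x ∂μ := by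
  let e := (LinearMap.toContinuousLinearMap L).toContinuousLinearEquivOfDetNeZero hL
  have he : ⇑e.toHomeomorph = L := rfl
  rw [← he, ← e.toHomeomorph.measurableEmbedding.integral_map, he,
    Measure.map_linearMap_addHaar_eq_smul_addHaar μ hL,
    integral_smul_measure, ENNReal.toReal_ofReal (abs_nonneg _), abs_inv]

section Diagonal

variable {ι : Type*} [Fintype ι] [DecidableEq ι]

@[simp] theorem Matrix.toEuclideanLin_diagonal_apply (c : ι → ℝ) (y : EuclideanSpace ℝ ι) (i : ι) :
    Matrix.toEuclideanLin (Matrix.diagonal c) y i = c i * y i := by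
  simp [Matrix.toLpLin_apply, Matrix.mulVec_diagonal]

theorem norm_le_norm_toEuclideanLin_diagonal {c : ι → ℝ} (hc : ∀ i, 1 ≤ |c i|)
    (y : EuclideanSpace ℝ ι) : ‖y‖ ≤ ‖Matrix.toEuclideanLin (Matrix.diagonal c) y‖ := by
  rw [EuclideanSpace.norm_eq, EuclideanSpace.norm_eq]
  gcongr with i
  rw [Matrix.toEuclideanLin_diagonal_apply, norm_mul, Real.norm_eq_abs]
  exact le_mul_of_one_le_left (norm_nonneg (y i)) (hc i)

theorem tendsto_toEuclideanLin_diagonal_cocompact {α : Type*} {l : Filter α}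
    {c : α → ι → ℝ} (hc : ∀ i, Tendsto (fun a => |c a i|) l atTop)
    {y : EuclideanSpace ℝ ι} (hy : y ≠ 0) :
    Tendsto (fun a => Matrix.toEuclideanLin (Matrix.diagonal (c a)) y) l (cocompact _) := by
  obtain ⟨i, hi⟩ : ∃ i, y i ≠ 0 := by
    by_contra! h
    exact hy (by ext i; simp [h i])
  rw [← Metric.cobounded_eq_cocompact, ← tendsto_norm_atTop_iff_cobounded]
  refine tendsto_atTop_mono (fun a => ?_) ((hc i).atTop_mul_const (norm_pos_iff.2 hi))
  calc |c a i| * ‖y i‖ = ‖Matrix.toEuclideanLin (Matrix.diagonal (c a)) y i‖ := by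
        rw [Matrix.toEuclideanLin_diagonal_apply, norm_mul, Real.norm_eq_abs (c a i)]
    _ ≤ _ := PiLp.norm_apply_le _ _

end Diagonal

theorem one_sub_exp_neg_nonneg {s : ℝ} (hs : 0 ≤ s) : 0 ≤ 1 - exp (-s) := by
  linarith [exp_le_one_iff.2 (neg_nonpos.2 hs)]

theorem one_sub_exp_neg_le_one (s : ℝ) : 1 - exp (-s) ≤ 1 := by
  linarith [exp_nonneg (-s)]

theorem one_sub_exp_neg_two_mul_le (s : ℝ) : 1 - exp (-(2 * s)) ≤ 2 * (1 - exp (-s)) := by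
  have h : exp (-(2 * s)) = exp (-s) ^ 2 := by rw [← exp_nat_mul]; ring_nf
  nlinarith [sq_nonneg (1 - exp (-s))]

theorem pnorm_pos {β c₁ c₂ : ℝ} (h : c₁ ≠ 0 ∨ c₂ ≠ 0) : 0 < pnorm β c₁ c₂ := by
  refine rpow_pos_of_pos ?_ _
  rcases h with h | h
  · exact add_pos_of_pos_of_nonneg (rpow_pos_of_pos (abs_pos.2 h) _) (by positivity)
  · exact add_pos_of_nonneg_of_pos (by positivity) (rpow_pos_of_pos (abs_pos.2 h) _)

theorem pnorm_mul_mul {β t : ℝ} (hβ : β ≠ 0) (ht : 0 ≤ t) (c₁ c₂ : ℝ) :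
    pnorm β (t * c₁) (t * c₂) = t * pnorm β c₁ c₂ := by
  have hexp : 2 / β * (β / 2) = 1 := by field_simp
  rw [pnorm, pnorm, abs_mul, abs_mul, abs_of_nonneg ht, mul_rpow ht (abs_nonneg c₁),
    mul_rpow ht (abs_nonneg c₂), ← mul_add, mul_rpow (by positivity) (by positivity),
    ← rpow_mul ht, hexp, rpow_one]

open Topology

local notation "ℝ³" => EuclideanSpace ℝ (Fin 3)

noncomputable def anisoWeight (α β γ : ℝ) (x : ℝ³) : ℝ :=
  pnorm β (√(x 0 ^ 2 + x 1 ^ 2) ^ α) (|x 2| ^ γ)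

theorem anisoWeight_pos (α β γ : ℝ) {x : ℝ³} (hx : x ≠ 0) : 0 < anisoWeight α β γ x := by
  refine pnorm_pos ?_
  by_cases h : x 0 = 0 ∧ x 1 = 0
  · refine Or.inr (rpow_pos_of_pos (abs_pos.2 fun h2 => hx ?_) _).ne'
    ext i; fin_cases i <;> simp [h.1, h.2, h2]
  · refine Or.inl (rpow_pos_of_pos (sqrt_pos.2 ?_) _).ne'
    rcases not_and_or.1 h with h | h <;> positivity

theorem uFun_eq_div_anisoWeight (g α β γ : ℝ) (x : ℝ³) :
    uFun g α β γ x = g / anisoWeight α β γ x := by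
  have h₁ : 0 ≤ √(x 0 ^ 2 + x 1 ^ 2) := sqrt_nonneg _
  have h₂ : 0 ≤ |x 2| := abs_nonneg _
  rw [uFun, anisoWeight, pnorm, abs_of_nonneg (rpow_nonneg h₁ _),
    abs_of_nonneg (rpow_nonneg h₂ _), ← rpow_mul h₁, ← rpow_mul h₂,
    rpow_neg (by positivity), div_eq_mul_inv]
  ring_nf

noncomputable def anisoScale (α γ t : ℝ) : ℝ³ →ₗ[ℝ] ℝ³ :=
  Matrix.toEuclideanLin (Matrix.diagonal ![t ^ α⁻¹, t ^ α⁻¹, t ^ γ⁻¹])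

theorem det_anisoScale (α γ : ℝ) {t : ℝ} (ht : 0 < t) :
    LinearMap.det (anisoScale α γ t) = t ^ (2 / α + 1 / γ) := by
  rw [anisoScale, LinearMap.det_toLpLin, Matrix.det_diagonal, Fin.prod_univ_three]
  change t ^ α⁻¹ * t ^ α⁻¹ * t ^ γ⁻¹ = _
  rw [← rpow_add ht, ← rpow_add ht]
  ring_nf

theorem anisoWeight_anisoScale {α β γ t : ℝ} (hα : α ≠ 0) (hβ : β ≠ 0) (hγ : γ ≠ 0)
    (ht : 0 ≤ t) (y : ℝ³) :
    anisoWeight α β γ (anisoScale α γ t y) = t * anisoWeight α β γ y := by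
  have hperp : √((anisoScale α γ t y) 0 ^ 2 + (anisoScale α γ t y) 1 ^ 2)
      = t ^ α⁻¹ * √(y 0 ^ 2 + y 1 ^ 2) := by
    simp only [anisoScale, Matrix.toEuclideanLin_diagonal_apply, Matrix.cons_val_zero,
      Matrix.cons_val_one]
    rw [mul_pow, mul_pow, ← mul_add, sqrt_mul (by positivity), sqrt_sq (by positivity)]
  have hpar : |(anisoScale α γ t y) 2| = t ^ γ⁻¹ * |y 2| := by
    simp only [anisoScale, Matrix.toEuclideanLin_diagonal_apply, Matrix.cons_val_two]
    simp [abs_mul, abs_of_nonneg (rpow_nonneg ht _)]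
  rw [anisoWeight, hperp, hpar, mul_rpow (by positivity) (sqrt_nonneg _),
    mul_rpow (by positivity) (abs_nonneg _), rpow_inv_rpow ht hα, rpow_inv_rpow ht hγ,
    pnorm_mul_mul hβ ht, anisoWeight]

theorem norm_le_norm_anisoScale {α γ t : ℝ} (hα : 0 ≤ α) (hγ : 0 ≤ γ) (ht : 1 ≤ t) (y : ℝ³) :
    ‖y‖ ≤ ‖anisoScale α γ t y‖ := by
  refine norm_le_norm_toEuclideanLin_diagonal (fun i => ?_) y
  have hpow : ∀ e : ℝ, 0 ≤ e → 1 ≤ |t ^ e| := fun e he =>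
    (one_le_rpow ht he).trans (le_abs_self _)
  fin_cases i <;> exact hpow _ (by simpa)

theorem tendsto_anisoScale_cocompact {α γ : ℝ} (hα : 0 < α) (hγ : 0 < γ) {y : ℝ³}
    (hy : y ≠ 0) : Tendsto (fun t => anisoScale α γ t y) atTop (cocompact ℝ³) := by
  refine tendsto_toEuclideanLin_diagonal_cocompact (fun i => ?_) hy
  have hpow : ∀ e : ℝ, 0 < e → Tendsto (fun t : ℝ => |t ^ e|) atTop atTop := fun e he =>
    tendsto_abs_atTop_atTop.comp (tendsto_rpow_atTop he)
  fin_cases i <;> exact hpow _ (by simpa)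

theorem integral_comp_anisoScale (α γ : ℝ) {t : ℝ} (ht : 0 < t) (f : ℝ³ → ℝ) :
    ∫ y, f (anisoScale α γ t y) = t ^ (-(2 / α + 1 / γ)) * ∫ x, f x := by
  have hdet := det_anisoScale α γ ht
  rw [integral_comp_linearMap volume f (hdet ▸ (rpow_pos_of_pos ht _).ne'), hdet,
    abs_of_pos (rpow_pos_of_pos ht _), rpow_neg ht.le, smul_eq_mul]

section Asymptotics

variable {U : ℝ³ → ℝ} {g α β γ : ℝ}

theorem tendsto_mul_comp_anisoScale (hα : 0 < α) (hβ : β ≠ 0) (hγ : 0 < γ)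
    (hlim : Tendsto (fun x => anisoWeight α β γ x * U x) (cocompact ℝ³) (𝓝 g))
    {y : ℝ³} (hy : y ≠ 0) :
    Tendsto (fun t => t * U (anisoScale α γ t y)) atTop (𝓝 (uFun g α β γ y)) := by
  have hw := anisoWeight_pos α β γ hy
  rw [uFun_eq_div_anisoWeight]
  refine ((hlim.comp (tendsto_anisoScale_cocompact hα hγ hy)).div_const _).congr' ?_
  filter_upwards [eventually_ge_atTop 0] with t ht
  rw [Function.comp_apply, anisoWeight_anisoScale hα.ne' hβ hγ.ne' ht]
  field_simp

theorem exists_mul_comp_anisoScale_le (hg : 0 < g) (hα : α ≠ 0) (hβ : β ≠ 0) (hγ : γ ≠ 0)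
    (hlim : Tendsto (fun x => anisoWeight α β γ x * U x) (cocompact ℝ³) (𝓝 g)) :
    ∃ R, ∀ t, 0 ≤ t → ∀ y, y ≠ 0 → R < ‖anisoScale α γ t y‖ →
      t * U (anisoScale α γ t y) ≤ 2 * uFun g α β γ y := by
  rw [← Metric.cobounded_eq_cocompact] at hlim
  obtain ⟨R, -, hR⟩ := (Metric.hasBasis_cobounded_compl_closedBall (0 : ℝ³)).eventually_iff.1
    (hlim.eventually (eventually_lt_nhds (by linarith : g < 2 * g)))
  refine ⟨R, fun t ht y hy hRy => ?_⟩
  have hw := anisoWeight_pos α β γ hy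
  have hlt := hR (by simpa using hRy)
  rw [anisoWeight_anisoScale hα hβ hγ ht] at hlt
  rw [uFun_eq_div_anisoWeight, mul_div_assoc', le_div_iff₀ hw]
  linarith

theorem tendsto_integral_comp_anisoScale (hUm : AEStronglyMeasurable U) (hU0 : ∀ x, 0 ≤ U x)
    (hg : 0 < g) (hα : 0 < α) (hβ : β ≠ 0) (hγ : 0 < γ)
    (hlim : Tendsto (fun x => anisoWeight α β γ x * U x) (cocompact ℝ³) (𝓝 g))
    (hint : Integrable fun y => 1 - exp (-uFun g α β γ y)) :
    Tendsto (fun t => ∫ y, (1 - exp (-(t * U (anisoScale α γ t y))))) atTop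
      (𝓝 (∫ y, (1 - exp (-uFun g α β γ y)))) := by
  obtain ⟨R, hR⟩ := exists_mul_comp_anisoScale_le hg hα.ne' hβ hγ.ne' hlim
  have hae : ∀ᵐ y : ℝ³, y ≠ 0 := Measure.ae_ne volume 0
  have hu0 : ∀ y, 0 ≤ uFun g α β γ y := fun y => by
    rw [uFun_eq_div_anisoWeight]
    exact div_nonneg hg.le (rpow_nonneg (by positivity) _)
  refine tendsto_integral_filter_of_dominated_convergence
    (fun y => (Metric.closedBall 0 R).indicator 1 y + 2 * (1 - exp (-uFun g α β γ y)))
    ?_ ?_ ?_ (hae.mono fun y hy => ?_)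
  · filter_upwards [eventually_gt_atTop 0] with t ht
    have hqmp := Measure.LinearMap.quasiMeasurePreserving volume (anisoScale α γ t)
      (det_anisoScale α γ ht ▸ (rpow_pos_of_pos ht _).ne')
    exact (by fun_prop : Continuous fun s => 1 - exp (-(t * s))).comp_aestronglyMeasurable
      (hUm.comp_quasiMeasurePreserving hqmp)
  · filter_upwards [eventually_ge_atTop 1] with t ht
    filter_upwards [hae] with y hy
    have ht0 : 0 ≤ t := zero_le_one.trans ht
    rw [Real.norm_eq_abs, abs_of_nonneg (one_sub_exp_neg_nonneg (mul_nonneg ht0 (hU0 _)))]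
    by_cases hRy : R < ‖anisoScale α γ t y‖
    · calc 1 - exp (-(t * U (anisoScale α γ t y)))
          ≤ 1 - exp (-(2 * uFun g α β γ y)) :=
            sub_le_sub_left (exp_le_exp.2 (neg_le_neg (hR t ht0 y hy hRy))) 1
        _ ≤ 2 * (1 - exp (-uFun g α β γ y)) := one_sub_exp_neg_two_mul_le _
        _ ≤ _ := le_add_of_nonneg_left (Set.indicator_nonneg (fun _ _ => zero_le_one) _)
    · have hyR : y ∈ Metric.closedBall 0 R := by
        rw [mem_closedBall_zero_iff]
        exact (norm_le_norm_anisoScale hα.le hγ.le ht y).trans (not_lt.1 hRy)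
      rw [Set.indicator_of_mem hyR, Pi.one_apply]
      linarith [one_sub_exp_neg_le_one (t * U (anisoScale α γ t y)),
        one_sub_exp_neg_nonneg (hu0 y)]
  · exact (integrableOn_const measure_closedBall_lt_top.ne).integrable_indicator
      measurableSet_closedBall |>.add (hint.const_mul 2)
  · exact ((continuous_exp.tendsto _).comp
      (tendsto_mul_comp_anisoScale hα hβ hγ hlim hy).neg).const_sub 1

end Asymptotics

theorem liminf_scaled_integral_ge_general (U : EuclideanSpace ℝ (Fin 3) → ℝ) (hUint : Integrable U)
    (hU0 : ∀ x, 0 ≤ U x) (g α β γ η : ℝ) (hg : 0 < g) (hα : 2 < α) (hβ : 0 < β)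
    (hγ₁ : α / (α - 2) < γ) (hη : η = 3 * α * γ / (2 * γ + α))
    (hlim : Tendsto
      (fun x : EuclideanSpace ℝ (Fin 3) =>
        pnorm β (Real.sqrt ((x 0) ^ 2 + (x 1) ^ 2) ^ α) (|x 2| ^ γ) * U x)
      (cocompact (EuclideanSpace ℝ (Fin 3))) (nhds g)) :
    (∫ x : EuclideanSpace ℝ (Fin 3), (1 - Real.exp (-(uFun g α β γ x)))) ≤
      Filter.liminf
        (fun t : ℝ => t ^ (-(3 / η)) *
          ∫ x : EuclideanSpace ℝ (Fin 3), (1 - Real.exp (-(t * U x)))) atTop := by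
  have hα₀ : 0 < α := by linarith
  have hγ₀ : 0 < γ := (div_pos hα₀ (by linarith)).trans hγ₁
  have hjac : 3 / η = 2 / α + 1 / γ := by
    subst hη
    field_simp
  have hscaled : (fun t => ∫ y, (1 - exp (-(t * U (anisoScale α γ t y))))) =ᶠ[atTop]
      fun t => t ^ (-(3 / η)) * ∫ x, (1 - exp (-(t * U x))) := by
    filter_upwards [eventually_gt_atTop 0] with t ht
    rw [hjac, integral_comp_anisoScale α γ ht fun x => 1 - exp (-(t * U x))]
  by_cases hint : Integrable fun x => 1 - exp (-uFun g α β γ x)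
  · exact ((tendsto_integral_comp_anisoScale hUint.aestronglyMeasurable hU0 hg hα₀ hβ.ne' hγ₀
      hlim hint).congr' hscaled).liminf_eq.ge
  · rw [integral_undef hint, liminf_eq]
    refine Real.sSup_nonneg' ⟨0, ?_, le_rfl⟩
    filter_upwards [eventually_ge_atTop 0] with t ht
    exact mul_nonneg (rpow_nonneg ht _)
      (integral_nonneg fun x => one_sub_exp_neg_nonneg (mul_nonneg ht (hU0 x)))

/-- Lower asymptotic bound via Fatou:
`liminf_{t→∞} t^{-3/η} ∫_{ℝ³} (1 - e^{-tU(x)}) dx ≥ ∫_{ℝ³} (1 - e^{-u(x)}) dx`. -/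
theorem liminf_scaled_integral_ge (U : EuclideanSpace ℝ (Fin 3) → ℝ) (hUint : Integrable U)
    (hU0 : ∀ x, 0 ≤ U x) (g α β γ η : ℝ) (hg : 0 < g) (hα : 2 < α) (hβ : 0 < β)
    (hγ₁ : α / (α - 2) < γ) (hγ₂ : γ < 3 * α / (α - 2)) (hη : η = 3 * α * γ / (2 * γ + α))
    (hlim : Tendsto
      (fun x : EuclideanSpace ℝ (Fin 3) =>
        pnorm β (Real.sqrt ((x 0) ^ 2 + (x 1) ^ 2) ^ α) (|x 2| ^ γ) * U x)
      (cocompact (EuclideanSpace ℝ (Fin 3))) (nhds g)) :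
    (∫ x : EuclideanSpace ℝ (Fin 3), (1 - Real.exp (-(uFun g α β γ x)))) ≤
      Filter.liminf
        (fun t : ℝ => t ^ (-(3 / η)) *
          ∫ x : EuclideanSpace ℝ (Fin 3), (1 - Real.exp (-(t * U x)))) atTop :=
  liminf_scaled_integral_ge_general U hUint hU0 g α β γ η hg hα hβ hγ₁ hη hlim
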